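/- For every μ ∈ K with μ ≠ 0: ∑_{a ∈ F, a ≠ 0, a ≠ 1} χ_n(μ·(a² + a)⁻¹) = −1 + k_n(μ). -/
import Mathlib


open Finset

/-- Absolute trace-style sum `Tr_n : F → F` for `n = 2m`. -/
def trN (m : ℕ) {F : Type*} [Field F] (x : F) : F :=
  ∑ i ∈ Finset.range (2 * m), x ^ (2 ^ i)

/-- Trace-style sum `Tr_m : F → F` (meant for elements of the subfield `K`). -/
def trM (m : ℕ) {F : Type*} [Field F] (x : F) : F :=
  ∑ i ∈ Finset.range m, x ^ (2 ^ i)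

/-- `ε(0) = 1`, `ε(t) = -1` for `t ≠ 0`. -/
def eps {F : Type*} [Field F] [DecidableEq F] (t : F) : ℤ :=
  if t = 0 then 1 else -1

/-- Kloosterman sum `k_m(μ) = ∑_{x ∈ K, x ≠ 0} χ_m(x + μ x⁻¹)`. -/
def klooM (m : ℕ) {F : Type*} [Field F] [Fintype F] [DecidableEq F] (μ : F) : ℤ :=
  ∑ x ∈ Finset.univ.filter (fun x : F => x ^ (2 ^ m) = x ∧ x ≠ 0),
    eps (trM m (x + μ * x⁻¹))

/-- Kloosterman sum over the big field: `k_n(μ) = ∑_{x ∈ F, x ≠ 0} χ_n(x + μ x⁻¹)`. -/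
def klooN (m : ℕ) {F : Type*} [Field F] [Fintype F] [DecidableEq F] (μ : F) : ℤ :=
  ∑ x ∈ Finset.univ.filter (fun x : F => x ≠ 0), eps (trN m (x + μ * x⁻¹))

/-- Walsh transform of `h : F → F` (with values in `{0,1}`) at `a`. -/
def walsh (m : ℕ) {F : Type*} [Field F] [Fintype F] [DecidableEq F] (h : F → F) (a : F) : ℤ :=
  ∑ x : F, eps (h x + trN m (a * x))

/-- The Boolean function `f_{λ,μ}(x) = Tr_n(λ x^{2^m+1}) + Tr_n(x)·Tr_n(μ x^{2^m-1})`. -/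
def fFun (m : ℕ) {F : Type*} [Field F] (l μ : F) : F → F :=
  fun x => trN m (l * x ^ (2 ^ m + 1)) + trN m x * trN m (μ * x ^ (2 ^ m - 1))

/-- The Boolean function
`g_{λ,μ}(x) = (1 + Tr_n(x))·Tr_n(λ x^{2^m+1}) + Tr_n(x)·Tr_n(μ x^{2^m-1})`. -/
def gFun (m : ℕ) {F : Type*} [Field F] (l μ : F) : F → F :=
  fun x => (1 + trN m x) * trN m (l * x ^ (2 ^ m + 1)) +
    trN m x * trN m (μ * x ^ (2 ^ m - 1))

section Aux
variable {F : Type*} [Field F] [Fintype F] [DecidableEq F]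

lemma trN_add (m : ℕ) [CharP F 2] (x y : F) :
    trN m (x + y) = trN m x + trN m y := by
  haveI : Fact (Nat.Prime 2) := ⟨Nat.prime_two⟩
  unfold trN
  rw [← Finset.sum_add_distrib]
  exact Finset.sum_congr rfl fun i _ => add_pow_char_pow x y 2 i

lemma trN_zero (m : ℕ) : trN m (0 : F) = 0 := by
  unfold trN
  exact Finset.sum_eq_zero fun i _ => zero_pow (by positivity)

lemma trN_shift (m : ℕ) (hcard : Fintype.card F = 2 ^ (2 * m)) (x : F) :
    ∑ i ∈ Finset.range (2 * m), x ^ 2 ^ (i + 1) = trN m x := by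
  have hx : x ^ 2 ^ (2 * m) = x := by rw [← hcard]; exact FiniteField.pow_card x
  have h := Finset.sum_range_succ' (fun i => x ^ 2 ^ i) (2 * m)
  simp only [pow_zero, pow_one] at h
  rw [Finset.sum_range_succ, hx] at h
  unfold trN
  linear_combination -h

lemma trN_sq (m : ℕ) (hcard : Fintype.card F = 2 ^ (2 * m)) (x : F) :
    trN m (x ^ 2) = trN m x := by
  rw [← trN_shift m hcard x]
  unfold trN
  refine Finset.sum_congr rfl fun i _ => ?_
  rw [← pow_mul]
  congr 1
  rw [pow_succ]
  ring

lemma trN_pow (m : ℕ) [CharP F 2] (hcard : Fintype.card F = 2 ^ (2 * m)) (x : F) :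
    trN m x ^ 2 = trN m x := by
  haveI : Fact (Nat.Prime 2) := ⟨Nat.prime_two⟩
  have h1 : trN m x ^ 2 = trN m (x ^ 2) := by
    unfold trN
    rw [sum_pow_char]
    refine Finset.sum_congr rfl fun i _ => ?_
    rw [← pow_mul, ← pow_mul]
    congr 1
    ring
  rw [h1, trN_sq m hcard x]

lemma trN_cases (m : ℕ) [CharP F 2] (hcard : Fintype.card F = 2 ^ (2 * m)) (x : F) :
    trN m x = 0 ∨ trN m x = 1 := by
  have h := trN_pow m hcard x
  have h0 : trN m x * (trN m x - 1) = 0 := by linear_combination h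
  rcases mul_eq_zero.mp h0 with h' | h'
  · exact Or.inl h'
  · exact Or.inr (by linear_combination h')

lemma eps_add [CharP F 2] {a b : F} (ha : a = 0 ∨ a = 1) (hb : b = 0 ∨ b = 1) :
    eps (a + b) = eps a * eps b := by
  have h2 : (1 : F) + 1 = 0 := CharTwo.add_self_eq_zero 1
  rcases ha with ha | ha <;> rcases hb with hb | hb <;> subst ha <;> subst hb <;>
    simp [eps, h2, one_ne_zero]

lemma trN_phi (m : ℕ) [CharP F 2] (hcard : Fintype.card F = 2 ^ (2 * m)) (a : F) :
    trN m (a ^ 2 + a) = 0 := by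
  rw [trN_add, trN_sq m hcard, CharTwo.add_self_eq_zero]

lemma phi_eq [CharP F 2] {a b : F} :
    a ^ 2 + a = b ^ 2 + b ↔ a = b ∨ a = b + 1 := by
  have h2 : (2 : F) = 0 := by exact_mod_cast CharP.cast_eq_zero F 2
  constructor
  · intro h
    have hc : (a + b) * (a + b - 1) = 0 := by
      linear_combination h + (b ^ 2 + a * b - a) * h2
    rcases mul_eq_zero.mp hc with h' | h'
    · exact Or.inl (by linear_combination h' - b * h2)
    · exact Or.inr (by linear_combination h' - b * h2)
  · rintro (rfl | rfl)
    · rfl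
    · linear_combination (b + 1) * h2

end Aux

section Aux2
variable {F : Type*} [Field F] [Fintype F] [DecidableEq F]

lemma char_two_of_card {m : ℕ} (hm : 0 < m) (hcard : Fintype.card F = 2 ^ (2 * m)) :
    CharP F 2 := by
  haveI : CharP F (ringChar F) := ringChar.charP F
  obtain ⟨k, hp, hk⟩ := FiniteField.card F (ringChar F)
  have hdvd : ringChar F ∣ 2 ^ (2 * m) := by
    rw [← hcard, hk]; exact dvd_pow_self _ (by positivity)
  have h2 : ringChar F = 2 :=
    (Nat.prime_dvd_prime_iff_eq hp Nat.prime_two).mp (hp.dvd_of_dvd_pow hdvd)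
  rw [← h2]; exact ringChar.charP F
end Aux2

section Aux3
variable {F : Type*} [Field F] [Fintype F] [DecidableEq F]

lemma a_ne_add_one (a : F) : a ≠ a + 1 := by
  intro h
  exact one_ne_zero (left_eq_add.mp h)

lemma fiber_eq [CharP F 2] (a : F) :
    (univ.filter fun c : F => c ^ 2 + c = a ^ 2 + a) = {a, a + 1} := by
  ext c
  simp only [Finset.mem_filter, Finset.mem_univ, true_and, Finset.mem_insert,
    Finset.mem_singleton]
  exact phi_eq

lemma card_image_phi {m : ℕ} (hm : 0 < m) [CharP F 2]
    (hcard : Fintype.card F = 2 ^ (2 * m)) :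
    ((univ : Finset F).image fun a => a ^ 2 + a).card = 2 ^ (2 * m - 1) := by
  have key := Finset.card_eq_sum_card_image (fun a : F => a ^ 2 + a) univ
  have hfib : ∀ b ∈ (univ : Finset F).image (fun a => a ^ 2 + a),
      (univ.filter fun a : F => a ^ 2 + a = b).card = 2 := by
    intro b hb
    obtain ⟨a, -, rfl⟩ := Finset.mem_image.mp hb
    rw [fiber_eq a, Finset.card_insert_of_notMem (by simp [a_ne_add_one a]),
      Finset.card_singleton]
  rw [Finset.sum_congr rfl hfib, Finset.sum_const, smul_eq_mul, Finset.card_univ, hcard] at key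
  have h2 : 2 ^ (2 * m) = 2 ^ (2 * m - 1) * 2 := by
    rw [← pow_succ]; congr 1; omega
  omega

lemma T_eq_image {m : ℕ} (hm : 0 < m) [CharP F 2]
    (hcard : Fintype.card F = 2 ^ (2 * m)) :
    (univ.filter fun y : F => trN m y = 0) = (univ : Finset F).image fun a => a ^ 2 + a := by
  set P : Polynomial F := ∑ i ∈ Finset.range (2 * m), Polynomial.X ^ (2 ^ i) with hP
  have heval : ∀ x : F, P.eval x = trN m x := by
    intro x; simp [hP, Polynomial.eval_finset_sum, trN]
  have hcoeff : P.coeff (2 ^ (2 * m - 1)) = 1 := by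
    simp only [hP, Polynomial.finset_sum_coeff, Polynomial.coeff_X_pow]
    have hiff : ∀ i : ℕ, ((2:ℕ) ^ (2 * m - 1) = 2 ^ i) ↔ (2 * m - 1 = i) := fun i =>
      ⟨fun h => Nat.pow_right_injective (le_refl 2) h, fun h => by rw [h]⟩
    rw [Finset.sum_congr rfl (fun i _ => by rw [if_congr (hiff i) rfl rfl]),
      Finset.sum_ite_eq]
    simp only [Finset.mem_range, if_pos (by omega : 2 * m - 1 < 2 * m)]
  have hP0 : P ≠ 0 := fun h => by simp [h] at hcoeff
  have hdeg : P.natDegree ≤ 2 ^ (2 * m - 1) := by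
    apply Polynomial.natDegree_sum_le_of_forall_le
    intro i hi
    rw [Polynomial.natDegree_X_pow]
    exact Nat.pow_le_pow_right (by norm_num) (by simp only [Finset.mem_range] at hi; omega)
  have hsub : (univ.filter fun y : F => trN m y = 0) ⊆ P.roots.toFinset := by
    intro y hy
    rw [Multiset.mem_toFinset, Polynomial.mem_roots']
    exact ⟨hP0, by rw [Polynomial.IsRoot, heval]; exact (Finset.mem_filter.mp hy).2⟩
  have hTle : (univ.filter fun y : F => trN m y = 0).card ≤ 2 ^ (2 * m - 1) :=
    le_trans (Finset.card_le_card hsub) (le_trans (Multiset.toFinset_card_le _)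
      (le_trans (Polynomial.card_roots' P) hdeg))
  have himg : ((univ : Finset F).image fun a => a ^ 2 + a) ⊆
      univ.filter fun y : F => trN m y = 0 := by
    intro b hb
    obtain ⟨a, -, rfl⟩ := Finset.mem_image.mp hb
    simp [Finset.mem_filter, trN_phi m hcard a]
  exact (Finset.eq_of_subset_of_card_le himg
    (by rw [card_image_phi hm hcard]; exact hTle)).symm

lemma card_T {m : ℕ} (hm : 0 < m) [CharP F 2]
    (hcard : Fintype.card F = 2 ^ (2 * m)) :
    (univ.filter fun y : F => trN m y = 0).card = 2 ^ (2 * m - 1) := by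
  rw [T_eq_image hm hcard, card_image_phi hm hcard]

end Aux3

theorem stmt13 (m : ℕ) (hm : 0 < m) (F : Type*) [Field F] [Fintype F] [DecidableEq F]
    (hcard : Fintype.card F = 2 ^ (2 * m))
    (μ : F) (hμK : μ ^ (2 ^ m) = μ) (hμ0 : μ ≠ 0) :
    ∑ a ∈ Finset.univ.filter (fun a : F => a ≠ 0 ∧ a ≠ 1),
      eps (trN m (μ * (a ^ 2 + a)⁻¹)) = -1 + klooN m μ := by
  haveI : CharP F 2 := char_two_of_card hm hcard
  classical
  have h2F : (2 : F) = 0 := by exact_mod_cast CharP.cast_eq_zero F 2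
  set H : F → ℤ := fun y => eps (trN m (μ * y⁻¹)) with hH
  set A : Finset F := Finset.univ.filter (fun a : F => a ≠ 0 ∧ a ≠ 1) with hA
  set D : Finset F := Finset.univ.filter (fun y : F => trN m y = 0 ∧ y ≠ 0) with hD
  set S : Finset F := Finset.univ.filter (fun x : F => x ≠ 0) with hS
  -- image of A under phi is D
  have himage : A.image (fun a : F => a ^ 2 + a) = D := by
    ext b
    simp only [hA, hD, Finset.mem_image, Finset.mem_filter, Finset.mem_univ, true_and]
    constructor
    · rintro ⟨a, ⟨ha0, ha1⟩, rfl⟩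
      refine ⟨trN_phi m hcard a, ?_⟩
      have ha1' : a + 1 ≠ 0 := fun h => ha1 (by linear_combination h - h2F)
      have hfac : a ^ 2 + a = a * (a + 1) := by ring
      rw [hfac]
      exact mul_ne_zero ha0 ha1'
    · rintro ⟨hb0, hbne⟩
      have hbT : b ∈ Finset.univ.filter fun y : F => trN m y = 0 := by
        simp [Finset.mem_filter, hb0]
      rw [T_eq_image hm hcard] at hbT
      obtain ⟨a, -, rfl⟩ := Finset.mem_image.mp hbT
      refine ⟨a, ⟨?_, ?_⟩, rfl⟩
      · rintro rfl; exact hbne (by ring)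
      · rintro rfl; exact hbne (by linear_combination h2F)
  -- fibers over D within A have two elements
  have hfibA : ∀ b ∈ D, (A.filter fun a : F => a ^ 2 + a = b).card = 2 := by
    intro b hb
    rw [← himage] at hb
    obtain ⟨a, haA, rfl⟩ := Finset.mem_image.mp hb
    obtain ⟨ha0, ha1⟩ := (Finset.mem_filter.mp haA).2
    have hset : (A.filter fun c : F => c ^ 2 + c = a ^ 2 + a) = {a, a + 1} := by
      ext c
      simp only [hA, Finset.mem_filter, Finset.mem_univ, true_and, Finset.mem_insert,
        Finset.mem_singleton]
      constructor
      · rintro ⟨-, hc⟩; exact phi_eq.mp hc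
      · rintro (rfl | rfl)
        · exact ⟨⟨ha0, ha1⟩, rfl⟩
        · exact ⟨⟨fun h => ha1 (by linear_combination h - h2F),
            fun h => ha0 (by linear_combination h)⟩, phi_eq.mpr (Or.inr rfl)⟩
    rw [hset, Finset.card_insert_of_notMem (by simp [a_ne_add_one a]),
      Finset.card_singleton]
  -- LHS equals twice the sum over D
  have hLHS : ∑ a ∈ A, eps (trN m (μ * (a ^ 2 + a)⁻¹)) = 2 * ∑ b ∈ D, H b := by
    have hc := Finset.sum_comp (s := A) H (fun a : F => a ^ 2 + a)
    rw [himage] at hc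
    calc ∑ a ∈ A, eps (trN m (μ * (a ^ 2 + a)⁻¹))
        = ∑ a ∈ A, H (a ^ 2 + a) := rfl
      _ = ∑ b ∈ D, (A.filter fun a : F => a ^ 2 + a = b).card • H b := hc
      _ = ∑ b ∈ D, 2 * H b := by
          refine Finset.sum_congr rfl fun b hb => ?_
          rw [hfibA b hb]; simp [two_mul]
      _ = 2 * ∑ b ∈ D, H b := by rw [Finset.mul_sum]
  -- sum of eps (trN y) over all of F is 0
  have huniv : ∑ y : F, eps (trN m y) = 0 := by
    rw [← Finset.sum_filter_add_sum_filter_not Finset.univ (fun y : F => trN m y = 0)]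
    have hcc := Finset.card_filter_add_card_filter_not
      (s := (Finset.univ : Finset F)) (fun y : F => trN m y = 0)
    rw [Finset.card_univ, hcard, card_T hm hcard] at hcc
    have c1 : ∑ y ∈ Finset.univ.filter (fun y : F => trN m y = 0), eps (trN m y)
        = (2 ^ (2 * m - 1) : ℤ) := by
      calc ∑ y ∈ Finset.univ.filter (fun y : F => trN m y = 0), eps (trN m y)
          = ∑ _y ∈ Finset.univ.filter (fun y : F => trN m y = 0), (1 : ℤ) :=
            Finset.sum_congr rfl fun y hy => by simp [eps, (Finset.mem_filter.mp hy).2]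
        _ = (2 ^ (2 * m - 1) : ℤ) := by
            rw [Finset.sum_const, card_T hm hcard]; simp
    have c2 : ∑ y ∈ Finset.univ.filter (fun y : F => ¬ trN m y = 0), eps (trN m y)
        = -((Finset.univ.filter (fun y : F => ¬ trN m y = 0)).card : ℤ) := by
      calc ∑ y ∈ Finset.univ.filter (fun y : F => ¬ trN m y = 0), eps (trN m y)
          = ∑ _y ∈ Finset.univ.filter (fun y : F => ¬ trN m y = 0), (-1 : ℤ) :=
            Finset.sum_congr rfl fun y hy => by simp [eps, (Finset.mem_filter.mp hy).2]
        _ = _ := by rw [Finset.sum_const]; simp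
    have hcompl : ((Finset.univ.filter (fun y : F => ¬ trN m y = 0)).card : ℤ)
        = (2 ^ (2 * m - 1) : ℤ) := by
      have h2m : (2:ℕ) ^ (2 * m) = 2 ^ (2 * m - 1) * 2 := by
        rw [← pow_succ]; congr 1; omega
      have : (Finset.univ.filter (fun y : F => ¬ trN m y = 0)).card = 2 ^ (2 * m - 1) := by
        omega
      exact_mod_cast congrArg (Nat.cast : ℕ → ℤ) this
    rw [c1, c2, hcompl]
    ring
  -- sum of H over S equals -1
  have hHsum : ∑ x ∈ S, H x = -1 := by
    have hbij : ∑ x ∈ S, H x = ∑ y ∈ S, eps (trN m y) := by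
      refine Finset.sum_nbij' (fun x : F => μ * x⁻¹) (fun y : F => μ * y⁻¹)
        ?_ ?_ ?_ ?_ ?_
      · intro a ha
        simp only [hS, Finset.mem_filter, Finset.mem_univ, true_and] at ha ⊢
        exact mul_ne_zero hμ0 (inv_ne_zero ha)
      · intro a ha
        simp only [hS, Finset.mem_filter, Finset.mem_univ, true_and] at ha ⊢
        exact mul_ne_zero hμ0 (inv_ne_zero ha)
      · intro a ha
        simp only [hS, Finset.mem_filter, Finset.mem_univ, true_and] at ha
        field_simp
      · intro a ha
        simp only [hS, Finset.mem_filter, Finset.mem_univ, true_and] at ha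
        field_simp
      · intro a _; rfl
    rw [hbij]
    have hS0 : S = Finset.univ.erase (0 : F) := Finset.filter_ne' Finset.univ 0
    have herase := Finset.sum_erase_add Finset.univ (fun y : F => eps (trN m y))
      (Finset.mem_univ (0 : F))
    rw [huniv] at herase
    have h0 : eps (trN m (0 : F)) = 1 := by rw [trN_zero]; simp [eps]
    beta_reduce at herase
    rw [h0] at herase
    rw [hS0]
    omega
  -- decompose klooN
  have hkloo : klooN m μ = 2 * (∑ b ∈ D, H b) + 1 := by
    unfold klooN
    have hsummand : ∀ x ∈ S, eps (trN m (x + μ * x⁻¹)) = eps (trN m x) * H x := by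
      intro x _
      rw [trN_add]
      exact eps_add (trN_cases m hcard x) (trN_cases m hcard _)
    rw [show Finset.univ.filter (fun x : F => x ≠ 0) = S from rfl,
      Finset.sum_congr rfl hsummand,
      ← Finset.sum_filter_add_sum_filter_not S (fun x : F => trN m x = 0)]
    have e1 : ∑ x ∈ S.filter (fun x : F => trN m x = 0), eps (trN m x) * H x
        = ∑ x ∈ S.filter (fun x : F => trN m x = 0), H x := by
      refine Finset.sum_congr rfl fun x hx => ?_
      have := (Finset.mem_filter.mp hx).2
      simp [eps, this]
    have e2 : ∑ x ∈ S.filter (fun x : F => ¬ trN m x = 0), eps (trN m x) * H x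
        = -∑ x ∈ S.filter (fun x : F => ¬ trN m x = 0), H x := by
      rw [← Finset.sum_neg_distrib]
      refine Finset.sum_congr rfl fun x hx => ?_
      have := (Finset.mem_filter.mp hx).2
      simp [eps, this]
    have hDS : S.filter (fun x : F => trN m x = 0) = D := by
      ext x
      simp only [hS, hD, Finset.mem_filter, Finset.mem_univ, true_and]
      tauto
    have hsplitH : ∑ x ∈ S.filter (fun x : F => trN m x = 0), H x
        + ∑ x ∈ S.filter (fun x : F => ¬ trN m x = 0), H x = -1 := by
      rw [Finset.sum_filter_add_sum_filter_not]
      exact hHsum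
    rw [e1, e2, hDS] at *
    rw [hDS] at hsplitH
    linarith [hsplitH]
  rw [hLHS, hkloo]
  ring
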